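/- arXiv:1906.01164 — 4 statements merged into one kernel-verified Lean document; each statement's English description precedes it below -/
import Mathlib

section
/- Let (α_k) be defined by α_0 = 1 and the recursion α_k² = (1 - α_k) α_{k-1}² with α_k ∈ (0,1) for k ≥ 1, and let A_k = ∏_{t=1}^k (1 - α_t). Then for all k ≥ 1, 2/(k+2)² ≤ A_k = α_k² ≤ 4/(k+2)². -/
theorem stmt_0 (α : ℕ → ℝ)
    (hα0 : α 0 = 1)
    (hmem : ∀ k : ℕ, 1 ≤ k → α k ∈ Set.Ioo (0:ℝ) 1)
    (hrec : ∀ k : ℕ, 1 ≤ k → (α k) ^ 2 = (1 - α k) * (α (k - 1)) ^ 2) :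
    ∀ k : ℕ, 1 ≤ k →
      (2 / ((k : ℝ) + 2) ^ 2 ≤ ∏ t ∈ Finset.Icc 1 k, (1 - α t)) ∧
      (∏ t ∈ Finset.Icc 1 k, (1 - α t)) = (α k) ^ 2 ∧
      (α k) ^ 2 ≤ 4 / ((k : ℝ) + 2) ^ 2 := by
  have key : ∀ k : ℕ, 1 ≤ k → 2 / ((k:ℝ)+2)^2 ≤ (α k)^2 ∧ (α k)^2 ≤ 4 / ((k:ℝ)+2)^2 := by
    intro k hk
    induction k, hk using Nat.le_induction with
    | base =>
      obtain ⟨h0, h1⟩ := hmem 1 le_rfl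
      have hr := hrec 1 le_rfl
      simp [hα0] at hr
      norm_num
      constructor
      · nlinarith [sq_nonneg (α 1 - 7/9)]
      · nlinarith [sq_nonneg (α 1 - 2/3)]
    | succ k hk ih =>
      obtain ⟨ilo, ihi⟩ := ih
      obtain ⟨h0, h1⟩ := hmem (k+1) (by omega)
      have hr := hrec (k+1) (by omega)
      simp at hr
      have hk2 : (0:ℝ) < (k:ℝ) + 2 := by positivity
      have hk3 : (0:ℝ) < (k:ℝ) + 3 := by positivity
      push_cast
      rw [div_le_iff₀ (by positivity), le_div_iff₀ (by positivity)] at *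
      constructor
      · -- lower bound: suppose α_{k+1}^2 * (k+3)^2 < 2
        by_contra h
        push_neg at h
        -- α_{k+1}^2 = (1-α_{k+1}) * α_k^2, with α_k^2*(k+2)^2 ≥ 2
        -- then (1-α_{k+1})*2/(k+2)^2 ≤ α_{k+1}^2 < 2/(k+3)^2
        -- so 1-α_{k+1} < (k+2)^2/(k+3)^2, α_{k+1} > (2k+5)/(k+3)^2
        -- α_{k+1}^2 > (2k+5)^2/(k+3)^4 ≥ 2/(k+3)^2 contradiction
        have ha : α (k+1) > (2*(k:ℝ)+5)/((k:ℝ)+3)^2 := by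
          rw [gt_iff_lt, div_lt_iff₀ (by positivity)]
          nlinarith [mul_pos (mul_pos hk2 hk2) (mul_pos hk3 hk3)]
        have hb : ((2*(k:ℝ)+5)/((k:ℝ)+3)^2) > 0 := by positivity
        have hsq : (α (k+1))^2 > ((2*(k:ℝ)+5)/((k:ℝ)+3)^2)^2 := by
          nlinarith
        rw [div_pow, gt_iff_lt, div_lt_iff₀ (by positivity)] at hsq
        nlinarith [sq_nonneg ((k:ℝ)), sq_nonneg ((k:ℝ)+3), mul_pos (mul_pos hk3 hk3) (mul_pos hk3 hk3)]
      · -- upper bound: suppose α_{k+1}^2*(k+3)^2 > 4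
        by_contra h
        push_neg at h
        have ha : α (k+1) > 2/((k:ℝ)+3) := by
          rw [gt_iff_lt, div_lt_iff₀ hk3]
          nlinarith [mul_pos hk3 hk3]
        -- α_{k+1}^2 = (1-α_{k+1}) α_k^2 < (1 - 2/(k+3)) * 4/(k+2)^2 = 4(k+1)/((k+2)^2(k+3)) ≤ 4/(k+3)^2
        have hApos : 0 < α k ^ 2 := by nlinarith [mul_pos hk2 hk2]
        have e1 : (1 - α (k+1)) * ((k:ℝ)+3) < (k:ℝ)+1 := by
          rw [gt_iff_lt, div_lt_iff₀ hk3] at ha; nlinarith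
        have e2 : α (k+1)^2 * ((k:ℝ)+3)^2 < ((k:ℝ)+1)*((k:ℝ)+3) * α k ^2 := by
          nlinarith [mul_lt_mul_of_pos_right e1 (mul_pos hApos hk3)]
        have e3 : ((k:ℝ)+1)*((k:ℝ)+3) * α k ^2 ≤ 4 := by nlinarith
        have h' : 4 < α (k+1)^2 * ((k:ℝ)+3)^2 := by nlinarith [h]
        linarith
  have prod_eq : ∀ k : ℕ, 1 ≤ k → (∏ t ∈ Finset.Icc 1 k, (1 - α t)) = (α k)^2 := by
    intro k hk
    induction k, hk using Nat.le_induction with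
    | base =>
      have hr := hrec 1 le_rfl
      simp [hα0] at hr ⊢
      linarith
    | succ k hk ih =>
      rw [Finset.prod_Icc_succ_top (by omega), ih]
      have hr := hrec (k+1) (by omega)
      simp at hr
      linarith [hr]
  intro k hk
  refine ⟨?_, prod_eq k hk, (key k hk).2⟩
  rw [prod_eq k hk]
  exact (key k hk).1
end

section
/- Let 0 ≤ q < 1 and let (α_k) satisfy α_0 = 1 and for k ≥ 1, α_k ∈ (0,1) with α_k² = (1 - α_k) α_{k-1}² + q α_k. Then for all k ≥ 1, α_k ≥ max(√q, √2/(k+2)), and consequently A_k := ∏_{t=1}^k (1 - α_t) ≤ min((1 - √q)^k, 4/(k+2)²). -/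
set_option maxHeartbeats 1000000

theorem stmt_2 (q : ℝ) (hq0 : 0 ≤ q) (hq1 : q < 1) (α : ℕ → ℝ)
    (hα0 : α 0 = 1)
    (hmem : ∀ k : ℕ, 1 ≤ k → α k ∈ Set.Ioo (0:ℝ) 1)
    (hrec : ∀ k : ℕ, 1 ≤ k →
      (α k) ^ 2 = (1 - α k) * (α (k - 1)) ^ 2 + q * α k) :
    ∀ k : ℕ, 1 ≤ k →
      max (Real.sqrt q) (Real.sqrt 2 / ((k : ℝ) + 2)) ≤ α k ∧
      (∏ t ∈ Finset.Icc 1 k, (1 - α t)) ≤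
        min ((1 - Real.sqrt q) ^ k) (4 / ((k : ℝ) + 2) ^ 2) := by
  have hsq1 : Real.sqrt q < 1 := by
    rw [show (1:ℝ) = Real.sqrt 1 by simp]
    exact Real.sqrt_lt_sqrt hq0 hq1
  have hsqq : Real.sqrt q ^ 2 = q := Real.sq_sqrt hq0
  have hsqnn : 0 ≤ Real.sqrt q := Real.sqrt_nonneg q
  have hs2 : Real.sqrt 2 ^ 2 = 2 := Real.sq_sqrt (by norm_num)
  have hs2nn : 0 ≤ Real.sqrt 2 := Real.sqrt_nonneg 2
  have hs15 : Real.sqrt 2 ≤ 3/2 := by nlinarith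
  have hpos : ∀ k, 0 < α k := by
    intro k
    rcases Nat.eq_zero_or_pos k with h | h
    · rw [h, hα0]; norm_num
    · exact (hmem k h).1
  -- Lemma 1 : sqrt q ≤ α k for all k
  have L1 : ∀ k : ℕ, Real.sqrt q ≤ α k := by
    intro k
    induction k with
    | zero => rw [hα0]; exact hsq1.le
    | succ n ih =>
      have hm := hmem (n+1) (by omega)
      have hr := hrec (n+1) (by omega)
      simp only [Nat.add_sub_cancel] at hr
      have hq2 : q ≤ (α n)^2 := by nlinarith [sq_nonneg (α n - Real.sqrt q)]
      have hq' : q ≤ (α (n+1))^2 := by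
        nlinarith [mul_nonneg (by linarith [hm.2] : (0:ℝ) ≤ 1 - α (n+1))
          (by linarith : (0:ℝ) ≤ (α n)^2 - q), hm.1.le]
      calc Real.sqrt q ≤ Real.sqrt ((α (n+1))^2) := Real.sqrt_le_sqrt hq'
        _ = α (n+1) := Real.sqrt_sq hm.1.le
  -- Lemma 2 : sqrt 2 / (k+2) ≤ α k for all k
  have L2 : ∀ k : ℕ, Real.sqrt 2 / ((k:ℝ) + 2) ≤ α k := by
    intro k
    induction k with
    | zero => rw [hα0]; rw [div_le_one (by norm_num)]; push_cast; nlinarith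
    | succ n ih =>
      set N : ℝ := (n : ℝ) with hN
      have hNnn : (0:ℝ) ≤ N := Nat.cast_nonneg n
      have hN2 : (0:ℝ) < N + 2 := by linarith
      have hN3 : (0:ℝ) < N + 3 := by linarith
      have hm := hmem (n+1) (by omega)
      have hr := hrec (n+1) (by omega)
      simp only [Nat.add_sub_cancel] at hr
      push_cast
      rw [show (N + 1 + 2 : ℝ) = N + 3 by ring]
      by_contra hcon
      push_neg at hcon
      set a := α (n+1) with ha
      have hapos : 0 < a := hm.1
      have ha1 : a < 1 := hm.2
      have h1 : Real.sqrt 2 ≤ α n * (N + 2) := by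
        rw [div_le_iff₀ hN2] at ih; exact ih
      have hcontra : a * (N + 3) < Real.sqrt 2 := by
        rw [lt_div_iff₀ hN3] at hcon; exact hcon
      have hanpos : 0 < α n := hpos n
      have h1sq : 2 ≤ (α n)^2 * (N+2)^2 := by nlinarith
      have h2sq : a^2 * (N+3)^2 < 2 := by nlinarith [mul_pos hapos hN3]
      have hstep : (1-a) * (α n)^2 ≤ a^2 := by nlinarith
      have key : (1-a) * 2 ≤ a^2 * (N+2)^2 := by
        have t1 : (1-a) * 2 ≤ (1-a) * ((α n)^2 * (N+2)^2) :=
          mul_le_mul_of_nonneg_left h1sq (by linarith)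
        have t2 : (1-a) * (α n)^2 * (N+2)^2 ≤ a^2 * (N+2)^2 :=
          mul_le_mul_of_nonneg_right hstep (by positivity)
        nlinarith
      have hA : a * (N+3) < 3/2 := lt_of_lt_of_le hcontra hs15
      have h3 : a * (N+3)^2 < 2*N + 5 := by
        have h3' := mul_lt_mul_of_pos_right hA hN3
        ring_nf at h3' ⊢
        linarith
      have h4 : 2 * (N+2)^2 < 2*(1-a) * (N+3)^2 := by
        ring_nf at h3 ⊢
        linarith
      have h5 : (1-a) * 2 * (N+3)^2 ≤ a^2 * (N+2)^2 * (N+3)^2 :=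
        mul_le_mul_of_nonneg_right key (by positivity)
      have h6 : a^2 * (N+3)^2 * (N+2)^2 < 2 * (N+2)^2 :=
        mul_lt_mul_of_pos_right h2sq (by positivity)
      nlinarith
  -- nonnegativity of partial products
  have hApos : ∀ k, 0 ≤ ∏ t ∈ Finset.Icc 1 k, (1 - α t) := by
    intro k
    apply Finset.prod_nonneg
    intro t ht
    have := (hmem t (Finset.mem_Icc.mp ht).1).2
    linarith
  -- Lemma 3
  have L3 : ∀ k : ℕ, (∏ t ∈ Finset.Icc 1 k, (1 - α t)) ≤ (α k)^2 ∧
      (∏ t ∈ Finset.Icc 1 k, (1 - α t)) ≤ 4 / ((k:ℝ)+2)^2 ∧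
      (∏ t ∈ Finset.Icc 1 k, (1 - α t)) ≤ (1 - Real.sqrt q)^k := by
    intro k
    induction k with
    | zero => simp [hα0]; norm_num
    | succ n ih =>
      obtain ⟨ih1, ih2, ih3⟩ := ih
      have hm := hmem (n+1) (by omega)
      have hr := hrec (n+1) (by omega)
      simp only [Nat.add_sub_cancel] at hr
      set a := α (n+1) with ha
      have hapos : 0 < a := hm.1
      have ha1 : a < 1 := hm.2
      have h1a : (0:ℝ) ≤ 1 - a := by linarith
      set A := ∏ t ∈ Finset.Icc 1 n, (1 - α t) with hAdef
      have hAnn : 0 ≤ A := hApos n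
      have hprod : ∏ t ∈ Finset.Icc 1 (n+1), (1 - α t) = A * (1 - a) := by
        rw [Finset.prod_Icc_succ_top (by omega)]
      set N : ℝ := (n : ℝ) with hN
      have hNnn : (0:ℝ) ≤ N := Nat.cast_nonneg n
      have hN2 : (0:ℝ) < N + 2 := by linarith
      have hN3 : (0:ℝ) < N + 3 := by linarith
      have part1 : A * (1 - a) ≤ a^2 := by
        have t1 : A * (1-a) ≤ (α n)^2 * (1-a) := mul_le_mul_of_nonneg_right ih1 h1a
        nlinarith
      refine ⟨by rw [hprod]; exact part1, ?_, ?_⟩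
      · -- 4/(N+3)^2
        rw [hprod]
        push_cast
        rw [show (N + 1 + 2 : ℝ) = N + 3 by ring]
        by_contra hcon
        push_neg at hcon
        have ha2 : 4 / (N+3)^2 < a^2 := lt_of_lt_of_le hcon part1
        have hc : 2/(N+3) < a := by
          by_contra hc'
          push_neg at hc'
          have : a^2 ≤ (2/(N+3))^2 := pow_le_pow_left₀ hapos.le hc' 2
          rw [div_pow] at this
          norm_num at this
          linarith
        have hc2 : 2 < a * (N+3) := by rw [div_lt_iff₀ hN3] at hc; linarith
        have e1 : 4 < A * (1-a) * (N+3)^2 := by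
          rw [div_lt_iff₀ (by positivity)] at hcon; linarith
        have e2 : A * (N+2)^2 ≤ 4 := by
          rw [le_div_iff₀ (by positivity)] at ih2; linarith
        nlinarith [mul_lt_mul_of_pos_right e1 (by positivity : (0:ℝ) < (N+2)^2),
          mul_le_mul_of_nonneg_right e2
            (mul_nonneg h1a (sq_nonneg (N+3)) : (0:ℝ) ≤ (1-a)*(N+3)^2),
          mul_lt_mul_of_pos_right hc2 hN3, hNnn]
      · rw [hprod, pow_succ]
        apply mul_le_mul ih3 (by have := L1 (n+1); linarith) h1a
          (pow_nonneg (by linarith) n)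
  intro k hk
  refine ⟨max_le (L1 k) (L2 k), le_min (L3 k).2.2 (L3 k).2.1⟩
end

section
/- Let γ ∈ (0,1] and define θ_j = γ/(1+j)^{1+γ} for j ≥ 1, and Θ_k = ∏_{j=1}^k (1 - θ_j). Then for all k ≥ 1, e^{-(1+γ)} ≤ Θ_k ≤ 1. -/
/-!
Each factor satisfies `1 - θ_j ≥ exp (-(1 + γ) θ_j)`, because `θ_j ≤ γ / (1 + γ)` and
`log (1 - θ) ≥ -θ / (1 - θ)`. Hence `Θ_k ≥ exp (-(1 + γ) ∑ θ_j)`, and the sum is at most `1`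
since it telescopes against `j ↦ j ^ (-γ)`: `θ_j ≤ j ^ (-γ) - (1 + j) ^ (-γ)`.
-/

open Real Finset

lemma one_add_mul_one_sub_le_rpow_neg {t γ : ℝ} (ht : 0 < t) (hγ : 0 ≤ γ) :
    1 + γ * (1 - t) ≤ t ^ (-γ) := by
  have hlog : γ * (1 - t) ≤ -γ * log t := by
    nlinarith [log_le_sub_one_of_pos ht]
  calc 1 + γ * (1 - t) ≤ -γ * log t + 1 := by linarith
    _ ≤ exp (-γ * log t) := add_one_le_exp _
    _ = t ^ (-γ) := by rw [rpow_def_of_pos ht, mul_comm]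

lemma div_rpow_one_add_le_rpow_neg_sub {x γ : ℝ} (hx : 0 < x) (hγ : 0 ≤ γ) :
    γ / (1 + x) ^ (1 + γ) ≤ x ^ (-γ) - (1 + x) ^ (-γ) := by
  have h1x : 0 < 1 + x := by linarith
  have hP : 0 < (1 + x) ^ γ := rpow_pos_of_pos h1x γ
  have key := one_add_mul_one_sub_le_rpow_neg (div_pos hx h1x) hγ
  rw [div_rpow hx.le h1x.le, rpow_neg h1x.le, div_inv_eq_mul] at key
  have h1t : 1 - x / (1 + x) = 1 / (1 + x) := by field_simp; ring
  rw [h1t] at key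
  rw [rpow_add h1x, rpow_one, rpow_neg h1x.le, le_sub_iff_add_le,
    ← mul_le_mul_iff_of_pos_right hP]
  calc (γ / ((1 + x) * (1 + x) ^ γ) + ((1 + x) ^ γ)⁻¹) * (1 + x) ^ γ
      = 1 + γ * (1 / (1 + x)) := by field_simp; ring
    _ ≤ x ^ (-γ) * (1 + x) ^ γ := key

lemma sum_Icc_div_rpow_le {γ : ℝ} (hγ : 0 ≤ γ) (k : ℕ) :
    ∑ j ∈ Icc 1 k, γ / (1 + (j : ℝ)) ^ (1 + γ) ≤ 1 - (1 + (k : ℝ)) ^ (-γ) := by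
  induction k with
  | zero => simp
  | succ n ih =>
    rw [sum_Icc_succ_top (by omega)]
    have hstep := div_rpow_one_add_le_rpow_neg_sub (x := 1 + (n : ℝ)) (by positivity) hγ
    push_cast
    rw [add_comm (n : ℝ) 1]
    linarith

lemma one_le_mul_one_sub_div_rpow {x γ : ℝ} (hx : 1 ≤ x) (hγ : 0 ≤ γ) :
    1 ≤ (1 + γ) * (1 - γ / (1 + x) ^ (1 + γ)) := by
  have hpow : 1 + γ ≤ (1 + x) ^ (1 + γ) := by
    have := one_add_mul_self_le_rpow_one_add (s := x) (by linarith) (p := 1 + γ) (by linarith)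
    nlinarith
  have hdiv : γ / (1 + x) ^ (1 + γ) ≤ γ / (1 + γ) :=
    div_le_div_of_nonneg_left hγ (by positivity) hpow
  calc 1 = (1 + γ) * (1 - γ / (1 + γ)) := by field_simp; ring
    _ ≤ (1 + γ) * (1 - γ / (1 + x) ^ (1 + γ)) := by gcongr

lemma exp_neg_mul_le_one_sub {c θ : ℝ} (hc : 0 ≤ c) (hθ : 0 ≤ θ) (h : 1 ≤ c * (1 - θ)) :
    exp (-(c * θ)) ≤ 1 - θ := by
  have hpos : 0 < 1 - θ := by nlinarith
  have hratio : θ / (1 - θ) ≤ c * θ := by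
    rw [div_le_iff₀ hpos]; nlinarith
  have hlog : -(θ / (1 - θ)) ≤ log (1 - θ) := by
    have := one_sub_inv_le_log_of_pos hpos
    rwa [← one_div, one_sub_div hpos.ne', sub_sub_cancel_left, neg_div] at this
  calc exp (-(c * θ)) ≤ exp (log (1 - θ)) := exp_le_exp.2 (by linarith)
    _ = 1 - θ := exp_log hpos

theorem stmt_3_general (γ : ℝ) (hγ0 : 0 < γ) :
    ∀ k : ℕ, 1 ≤ k →
      Real.exp (-(1 + γ)) ≤
        (∏ j ∈ Finset.Icc 1 k, (1 - γ / ((1 : ℝ) + (j : ℝ)) ^ (1 + γ))) ∧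
      (∏ j ∈ Finset.Icc 1 k, (1 - γ / ((1 : ℝ) + (j : ℝ)) ^ (1 + γ))) ≤ 1 := by
  intro k _
  set θ : ℕ → ℝ := fun j => γ / (1 + (j : ℝ)) ^ (1 + γ)
  have hθ0 : ∀ j, 0 ≤ θ j := fun j => by positivity
  have hθ1 : ∀ j ∈ Icc 1 k, 1 ≤ (1 + γ) * (1 - θ j) := fun j hj =>
    one_le_mul_one_sub_div_rpow (by exact_mod_cast (mem_Icc.1 hj).1) hγ0.le
  have hsum : ∑ j ∈ Icc 1 k, θ j ≤ 1 := by
    have := sum_Icc_div_rpow_le hγ0.le k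
    linarith [rpow_nonneg (by positivity : (0 : ℝ) ≤ 1 + k) (-γ)]
  constructor
  · calc exp (-(1 + γ)) ≤ exp (-((1 + γ) * ∑ j ∈ Icc 1 k, θ j)) := by
          gcongr; nlinarith
      _ = ∏ j ∈ Icc 1 k, exp (-((1 + γ) * θ j)) := by
          rw [mul_sum, ← sum_neg_distrib, exp_sum]
      _ ≤ ∏ j ∈ Icc 1 k, (1 - θ j) := prod_le_prod (fun _ _ => (exp_pos _).le)
          fun j hj => exp_neg_mul_le_one_sub (by linarith) (hθ0 j) (hθ1 j hj)
  · exact prod_le_one (fun j hj => by nlinarith [hθ1 j hj, hθ0 j]) fun j _ => by linarith [hθ0 j]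

theorem stmt_3 (γ : ℝ) (hγ0 : 0 < γ) (hγ1 : γ ≤ 1) :
    ∀ k : ℕ, 1 ≤ k →
      Real.exp (-(1 + γ)) ≤
        (∏ j ∈ Finset.Icc 1 k, (1 - γ / ((1 : ℝ) + (j : ℝ)) ^ (1 + γ))) ∧
      (∏ j ∈ Finset.Icc 1 k, (1 - γ / ((1 : ℝ) + (j : ℝ)) ^ (1 + γ))) ≤ 1 :=
  stmt_3_general γ hγ0
end

section
/- Let F = f + ψ be μ-strongly convex and let h_k(x) = F(x) + (κ/2)‖x - y_{k-1}‖² and h_{k-1}(x) = F(x) + (κ/2)‖x - y_{k-2}‖² with respective minimizers x_k* and x_{k-1}* and minimum values h_k* and h_{k-1}*. Then for any point x_{k-1}, h_k(x_{k-1}) - h_k* ≤ (3/2)(h_{k-1}(x_{k-1}) - h_{k-1}*) + (3κ/2)‖y_{k-1} - y_{k-2}‖². -/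
open InnerProductSpace RealInnerProductSpace

set_option maxHeartbeats 1000000

section helpers

variable {E : Type*} [NormedAddCommGroup E] [InnerProductSpace ℝ E]

lemma quad_combo (a b : E) (t : ℝ) :
    ‖(1-t)•a + t•b‖^2 = (1-t)*‖a‖^2 + t*‖b‖^2 - t*(1-t)*‖a-b‖^2 := by
  have ha : ‖a‖^2 = ⟪a, a⟫_ℝ := (real_inner_self_eq_norm_sq a).symm
  have hb : ‖b‖^2 = ⟪b, b⟫_ℝ := (real_inner_self_eq_norm_sq b).symm
  have hab : ‖a - b‖^2 = ⟪a,a⟫_ℝ - 2*⟪a,b⟫_ℝ + ⟪b,b⟫_ℝ := by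
    rw [norm_sub_sq_real, ha, hb]
  have hc : ‖(1-t)•a + t•b‖^2 = ⟪(1-t)•a + t•b, (1-t)•a + t•b⟫_ℝ :=
    (real_inner_self_eq_norm_sq _).symm
  simp only [inner_add_add_self, real_inner_smul_left, real_inner_smul_right] at hc
  rw [hc, ha, hb, hab, real_inner_comm b a]; ring

lemma key_ineq (u v w : E) :
    ‖u - w‖^2 - ‖v - w‖^2 - (‖u‖^2 - ‖v‖^2) = 2 * ⟪v - u, w⟫_ℝ := by
  rw [norm_sub_sq_real, norm_sub_sq_real, inner_sub_left]
  ring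

end helpers

theorem stmt_11 {n : ℕ} (μ κ : ℝ) (hμ : 0 ≤ μ) (hκ : 0 < κ)
    (F : EuclideanSpace ℝ (Fin n) → ℝ)
    (hFsc : StrongConvexOn Set.univ μ F) (hFlsc : LowerSemicontinuous F)
    (y1 y2 : EuclideanSpace ℝ (Fin n))
    (xk xkm : EuclideanSpace ℝ (Fin n))
    (hxk : IsMinOn (fun x => F x + κ / 2 * ‖x - y1‖ ^ 2) Set.univ xk)
    (hxkm : IsMinOn (fun x => F x + κ / 2 * ‖x - y2‖ ^ 2) Set.univ xkm) :
    ∀ z : EuclideanSpace ℝ (Fin n),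
      (F z + κ / 2 * ‖z - y1‖ ^ 2) - (F xk + κ / 2 * ‖xk - y1‖ ^ 2) ≤
        3 / 2 * ((F z + κ / 2 * ‖z - y2‖ ^ 2) - (F xkm + κ / 2 * ‖xkm - y2‖ ^ 2))
          + 3 * κ / 2 * ‖y1 - y2‖ ^ 2 := by
  intro z
  have hFconv : ConvexOn ℝ Set.univ F :=
    hFsc.convexOn (fun r => mul_nonneg (by linarith) (sq_nonneg r))
  set A : ℝ := (F z + κ / 2 * ‖z - y2‖ ^ 2) - (F xkm + κ / 2 * ‖xkm - y2‖ ^ 2) with hA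
  clear_value A
  have hA0 : 0 ≤ A := by
    have := hxkm (Set.mem_univ z); simpa [hA] using this
  have hgrowth : ∀ w : EuclideanSpace ℝ (Fin n), κ / 2 * ‖w - xkm‖ ^ 2 ≤
      (F w + κ / 2 * ‖w - y2‖ ^ 2) - (F xkm + κ / 2 * ‖xkm - y2‖ ^ 2) := by
    intro w
    have hAw0 : 0 ≤ (F w + κ / 2 * ‖w - y2‖ ^ 2) - (F xkm + κ / 2 * ‖xkm - y2‖ ^ 2) := by
      have := hxkm (Set.mem_univ w); simpa using this
    have key : ∀ t : ℝ, 0 < t → t ≤ 1 → κ / 2 * (1 - t) * ‖w - xkm‖ ^ 2 ≤ (F w + κ / 2 * ‖w - y2‖ ^ 2) - (F xkm + κ / 2 * ‖xkm - y2‖ ^ 2) := by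
      intro t ht0 ht1
      have hmem := hxkm (Set.mem_univ ((1-t)•xkm + t•w))
      have hFc : F ((1-t)•xkm + t•w) ≤ (1-t) * F xkm + t * F w := by
        have := hFconv.2 (Set.mem_univ xkm) (Set.mem_univ w) (by linarith : (0:ℝ) ≤ 1 - t)
          (le_of_lt ht0) (by ring)
        simpa [smul_eq_mul] using this
      have hq : ‖((1-t)•xkm + t•w) - y2‖^2
          = (1-t)*‖xkm - y2‖^2 + t*‖w - y2‖^2 - t*(1-t)*‖xkm - w‖^2 := by
        have h1 : ((1-t)•xkm + t•w) - y2 = (1-t)•(xkm - y2) + t•(w - y2) := by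
          rw [smul_sub, smul_sub]; module
        have h2 : (xkm - y2) - (w - y2) = xkm - w := by abel
        rw [h1, quad_combo (xkm - y2) (w - y2) t, h2]
      have hmin : F xkm + κ / 2 * ‖xkm - y2‖ ^ 2
          ≤ F ((1-t)•xkm + t•w) + κ / 2 * ‖((1-t)•xkm + t•w) - y2‖^2 := by
        simpa using hmem
      rw [hq] at hmin
      have hnorm : ‖xkm - w‖ = ‖w - xkm‖ := norm_sub_rev _ _
      rw [hnorm] at hmin
      nlinarith [sq_nonneg ‖w - xkm‖]
    by_contra hcon
    push_neg at hcon
    obtain ⟨B, hB⟩ : ∃ B, B = F w + κ / 2 * ‖w - y2‖ ^ 2 - (F xkm + κ / 2 * ‖xkm - y2‖ ^ 2) := ⟨_, rfl⟩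
    rw [← hB] at hcon hAw0
    have key' : ∀ t : ℝ, 0 < t → t ≤ 1 → κ / 2 * (1 - t) * ‖w - xkm‖ ^ 2 ≤ B := by
      intro t a b; rw [hB]; exact key t a b
    obtain ⟨d, hd⟩ : ∃ d, d = κ / 2 * ‖w - xkm‖ ^ 2 := ⟨_, rfl⟩
    rw [← hd] at hcon
    have hd0 : 0 < d := lt_of_le_of_lt hAw0 hcon
    obtain ⟨t, htdef⟩ : ∃ t : ℝ, t = (d - B) / (2*d) := ⟨_, rfl⟩
    have ht0 : 0 < t := htdef ▸ div_pos (by linarith) (by linarith)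
    have ht1 : t ≤ 1 := by
      rw [htdef, div_le_one (by linarith)]; linarith
    have h2 := key' t ht0 ht1
    have htd : t * d = (d - B) / 2 := by
      rw [htdef]; field_simp
    have heq : κ / 2 * (1 - t) * ‖w - xkm‖ ^ 2 = d - t * d := by
      rw [hd]; ring
    rw [heq, htd] at h2
    linarith
  have hgrow : κ / 2 * ‖z - xkm‖ ^ 2 ≤ A := by rw [hA]; exact hgrowth z
  have hid : ‖(xk - xkm) - (y1 - y2)‖^2
      = ‖xk - xkm‖^2 + ‖xk - y1‖^2 - ‖xk - y2‖^2 + 2*⟪xkm - y2, y1 - y2⟫_ℝ := by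
    have w1 : xk - y1 = (xk - y2) - (y1 - y2) := by abel
    have w2 : xk - xkm = (xk - y2) - (xkm - y2) := by abel
    rw [norm_sub_sq_real (xk - xkm) (y1 - y2), w1,
      norm_sub_sq_real (xk - y2) (y1 - y2), w2, inner_sub_left]
    ring
  have hlow : F xkm + κ/2*‖xkm - y2‖^2 - κ*⟪xkm - y2, y1 - y2⟫_ℝ
      ≤ F xk + κ/2*‖xk - y1‖^2 := by
    have h0 : 0 ≤ κ/2 * (‖xk - xkm‖^2 + ‖xk - y1‖^2 - ‖xk - y2‖^2
        + 2*⟪xkm - y2, y1 - y2⟫_ℝ) := by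
      apply mul_nonneg (by linarith)
      rw [← hid]; positivity
    have h1 := hgrowth xk
    nlinarith [h0, h1]
  have hz1k : κ/2*‖z - y1‖^2
      = κ/2*‖z - y2‖^2 - κ*⟪z - y2, y1 - y2⟫_ℝ + κ/2*‖y1 - y2‖^2 := by
    have w3 : z - y1 = (z - y2) - (y1 - y2) := by abel
    rw [w3, norm_sub_sq_real]; ring
  have hizk : κ*⟪xkm - y2, y1 - y2⟫_ℝ - κ*⟪z - y2, y1 - y2⟫_ℝ
      = κ*⟪xkm - z, y1 - y2⟫_ℝ := by
    have : ⟪xkm - z, y1 - y2⟫_ℝ = ⟪xkm - y2, y1 - y2⟫_ℝ - ⟪z - y2, y1 - y2⟫_ℝ := by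
      rw [← inner_sub_left]; congr 1; abel
    rw [this]; ring
  have hcs : ⟪xkm - z, y1 - y2⟫_ℝ ≤ ‖z - xkm‖ * ‖y1 - y2‖ := by
    calc ⟪xkm - z, y1 - y2⟫_ℝ ≤ ‖xkm - z‖ * ‖y1 - y2‖ := real_inner_le_norm _ _
      _ = ‖z - xkm‖ * ‖y1 - y2‖ := by rw [norm_sub_rev]
  have hyoung : ‖z - xkm‖ * ‖y1 - y2‖ ≤ (1/4) * ‖z - xkm‖^2 + ‖y1 - y2‖^2 := by
    nlinarith [sq_nonneg (‖z - xkm‖/2 - ‖y1 - y2‖)]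
  have hbound : κ * ⟪xkm - z, y1 - y2⟫_ℝ ≤ κ/4 * ‖z - xkm‖^2 + κ * ‖y1 - y2‖^2 := by
    nlinarith [mul_le_mul_of_nonneg_left (hcs.trans hyoung) hκ.le]
  linarith [hlow, hz1k, hizk, hbound, hgrow, hA.ge, hA.le]
end
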